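/- (Minimum distance of SRF codes with poles.) Assume L ≥ d_f + d_g − 1. For any two distinct codewords C_1 = Ev^∞(f/g) and C_2 = Ev^∞(f'/g') of the simultaneous rational function code with poles, the error locator polynomial Λ_{C_1,C_2} satisfies deg Λ_{C_1,C_2} ≥ L − d_f − d_g + 2. -/

import Mathlib

open Polynomial

/-! Take a coordinate `i` where the two fractions differ and put `h = f_i g' − f'_i g ≠ 0`. Every
truncated valuation `μ_j` is at most the multiplicity of the root `α_j` of `h`; as the `α_j` are
distinct, `∑ μ_j ≤ deg h ≤ d_f + d_g − 2`, so `deg Λ = L − ∑ μ_j ≥ L − d_f − d_g + 2`. -/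

theorem Multiset.sum_count_le_card {ι : Type*} [DecidableEq ι] (s : Multiset ι) (t : Finset ι) :
    ∑ a ∈ t, s.count a ≤ card s :=
  calc ∑ a ∈ t, s.count a = ∑ a ∈ t, (s.filter (· ∈ t)).count a :=
        Finset.sum_congr rfl fun _ ha => (count_filter_of_pos ha).symm
    _ = card (s.filter (· ∈ t)) := Multiset.sum_count_eq_card fun _ ha => (mem_filter.1 ha).2
    _ ≤ card s := card_le_card (filter_le _ _)

namespace Polynomial

variable {R : Type*} [CommRing R]

theorem sum_rootMultiplicity_le_natDegree [IsDomain R] [DecidableEq R] {ι : Type*}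
    (s : Finset ι) {α : ι → R} (hα : Set.InjOn α s) (p : R[X]) :
    ∑ j ∈ s, p.rootMultiplicity (α j) ≤ p.natDegree :=
  calc ∑ j ∈ s, p.rootMultiplicity (α j) = ∑ a ∈ s.image α, p.roots.count a := by
        simp only [Finset.sum_image hα, count_roots]
    _ ≤ Multiset.card p.roots := Multiset.sum_count_le_card _ _
    _ ≤ p.natDegree := card_roots' p

theorem natDegree_prod_X_sub_C_pow [Nontrivial R] {ι : Type*} (s : Finset ι) (a : ι → R)
    (k : ι → ℕ) : (∏ j ∈ s, (X - C (a j)) ^ k j).natDegree = ∑ j ∈ s, k j := by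
  rw [natDegree_prod_of_monic _ _ fun j _ => (monic_X_sub_C (a j)).pow (k j)]
  simp [(monic_X_sub_C _).natDegree_pow]

theorem natDegree_le_pred_of_degree_lt {p : R[X]} {n : ℕ} (h : p.degree < n) :
    p.natDegree ≤ n - 1 := by
  rcases eq_or_ne p 0 with rfl | hp
  · simp
  · have := (natDegree_lt_iff_degree_lt hp).2 h
    omega

theorem natDegree_mul_sub_mul_le {p p' q q' : R[X]} {a b : ℕ} (hp : p.degree < a)
    (hp' : p'.degree < a) (hq : q.degree < b) (hq' : q'.degree < b) :
    (p * q' - p' * q).natDegree ≤ (a - 1) + (b - 1) :=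
  (natDegree_sub_le _ _).trans <| max_le
    (natDegree_mul_le.trans <| add_le_add (natDegree_le_pred_of_degree_lt hp)
      (natDegree_le_pred_of_degree_lt hq'))
    (natDegree_mul_le.trans <| add_le_add (natDegree_le_pred_of_degree_lt hp')
      (natDegree_le_pred_of_degree_lt hq))

end Polynomial

theorem srf_poles_min_dist_general {F : Type*} [Field F] [DecidableEq F]
    (n ℓ : ℕ) [NeZero ℓ]
    (α : Fin n → F) (hα : Function.Injective α)
    (lam : Fin n → ℕ)
    (M : F[X]) (hM : M = ∏ j, (X - C (α j)) ^ lam j)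
    (L : ℕ) (hL : L = M.natDegree)
    (df dg : ℕ) (hdf : 0 < df) (hdg : 0 < dg)
    (f f' : Fin ℓ → F[X]) (g g' : F[X])
    (hdegf : ∀ i, (f i).degree < (df : ℕ)) (hdegf' : ∀ i, (f' i).degree < (df : ℕ))
    (hdegg : g.degree < (dg : ℕ)) (hdegg' : g'.degree < (dg : ℕ))
    -- the two reduced vectors of fractions are distinct
    (hne : ∃ i, f i * g' ≠ f' i * g)
    -- `μ j` is the truncated valuation of the error column `j`
    (μ : Fin n → ℕ)
    (hμ : ∀ j, μ j = min (lam j) (Finset.univ.inf' Finset.univ_nonempty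
        (fun i => if f i * g' - f' i * g = 0 then lam j
          else rootMultiplicity (α j) (f i * g' - f' i * g))))
    (Λ : F[X]) (hΛ : Λ = ∏ j, (X - C (α j)) ^ (lam j - μ j)) :
    (L : ℤ) - df - dg + 2 ≤ (Λ.natDegree : ℤ) := by
  obtain ⟨i, hi⟩ := hne
  have hμ_le_lam (j) : μ j ≤ lam j := by
    rw [hμ j]
    exact min_le_left _ _
  have hμ_le_mult (j) : μ j ≤ rootMultiplicity (α j) (f i * g' - f' i * g) := by
    rw [hμ j]
    refine (min_le_right _ _).trans ?_
    have := Finset.inf'_le (fun i => if f i * g' - f' i * g = 0 then lam j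
      else rootMultiplicity (α j) (f i * g' - f' i * g)) (Finset.mem_univ i)
    rwa [if_neg (sub_ne_zero.2 hi)] at this
  have hμ_sum : ∑ j, μ j ≤ (df - 1) + (dg - 1) :=
    (Finset.sum_le_sum fun j _ => hμ_le_mult j).trans <|
      (sum_rootMultiplicity_le_natDegree _ hα.injOn _).trans <|
        natDegree_mul_sub_mul_le (hdegf i) (hdegf' i) hdegg hdegg'
  have hΛ_deg : Λ.natDegree = L - ∑ j, μ j := by
    rw [hΛ, hL, hM, natDegree_prod_X_sub_C_pow, natDegree_prod_X_sub_C_pow,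
      Finset.sum_tsub_distrib _ fun j _ => hμ_le_lam j]
  have hμ_sum_le_L : ∑ j, μ j ≤ L := by
    rw [hL, hM, natDegree_prod_X_sub_C_pow]
    exact Finset.sum_le_sum fun j _ => hμ_le_lam j
  omega

/-- Minimum distance of SRF codes with poles: if `L ≥ d_f + d_g − 1`, then for any two distinct
codewords `Ev^∞(f/g)` and `Ev^∞(f'/g')`, the error locator polynomial
`Λ = ∏_j (x − α_j)^{λ_j − μ_j}` (where `μ_j` is the truncated valuation of the error column,
equal to that of `f'_i g − f_i g'`) satisfies `deg Λ ≥ L − d_f − d_g + 2`. -/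
theorem srf_poles_min_dist {F : Type*} [Field F] [Fintype F] [DecidableEq F]
    (n ℓ : ℕ) [NeZero ℓ]
    (α : Fin n → F) (hα : Function.Injective α)
    (lam : Fin n → ℕ) (hlam : ∀ j, 0 < lam j)
    (M : F[X]) (hM : M = ∏ j, (X - C (α j)) ^ lam j)
    (L : ℕ) (hL : L = M.natDegree)
    (df dg : ℕ) (hdf : 0 < df) (hdg : 0 < dg)
    (hLd : (df : ℤ) + dg - 1 ≤ L)
    (f f' : Fin ℓ → F[X]) (g g' : F[X]) (hg : g ≠ 0) (hg' : g' ≠ 0)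
    (hdegf : ∀ i, (f i).degree < (df : ℕ)) (hdegf' : ∀ i, (f' i).degree < (df : ℕ))
    (hdegg : g.degree < (dg : ℕ)) (hdegg' : g'.degree < (dg : ℕ))
    (hred : gcd (Finset.univ.gcd f) g = 1) (hred' : gcd (Finset.univ.gcd f') g' = 1)
    -- the two reduced vectors of fractions are distinct
    (hne : ∃ i, f i * g' ≠ f' i * g)
    -- `μ j` is the truncated valuation of the error column `j`
    (μ : Fin n → ℕ)
    (hμ : ∀ j, μ j = min (lam j) (Finset.univ.inf' Finset.univ_nonempty
        (fun i => if f i * g' - f' i * g = 0 then lam j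
          else rootMultiplicity (α j) (f i * g' - f' i * g))))
    (Λ : F[X]) (hΛ : Λ = ∏ j, (X - C (α j)) ^ (lam j - μ j)) :
    (L : ℤ) - df - dg + 2 ≤ (Λ.natDegree : ℤ) :=
  srf_poles_min_dist_general n ℓ α hα lam M hM L hL df dg hdf hdg f f' g g' hdegf hdegf' hdegg
    hdegg' hne μ hμ Λ hΛ
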